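/- Let B and C be A-bounded linear operators on H (i.e., there exists λ > 0 with ‖Bx‖_A ≤ λ‖x‖_A and ‖Cx‖_A ≤ λ‖x‖_A for all x). Then for every α ∈ [0,1], (w_{A,e}(B,C))² ≤ (w_A(√α·B + √(1−α)·C))² + (w_A(√(1−α)·B − √α·C))². -/

import Mathlib

/-!
For an `A`-unit vector `x` put `b = ⟨Bx,x⟩_A` and `c = ⟨Cx,x⟩_A`. With `s = √α`, `t = √(1-α)`,
the numbers `s b + t c` and `t b - s c` are the values at `x` of the two operators on the right,
and since `(s, t)` is a unit vector the map `(b, c) ↦ (s b + t c, t b - s c)` is a rotation: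
`|s b + t c|² + |t b - s c|² = |b|² + |c|²`. Bounding both terms on the left by the
`A`-numerical radii and taking the supremum over `x` gives the inequality. `A`-boundedness of
`B` and `C` (with Cauchy–Schwarz for `⟨·,·⟩_A`) is what makes these suprema finite.
-/

noncomputable section

open scoped ComplexInnerProductSpace

variable {H : Type*} [NormedAddCommGroup H] [InnerProductSpace ℂ H] [CompleteSpace H]

/-- The semi-inner product induced by a positive operator `A`:
`⟨x,y⟩_A = ⟨Ax,y⟩` (linear in the first argument, following the paper's convention). -/
def innerA (A : H →L[ℂ] H) (x y : H) : ℂ := ⟪y, A x⟫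

/-- The seminorm induced by `A`: `‖x‖_A = ⟨Ax,x⟩^{1/2}`. -/
def normA (A : H →L[ℂ] H) (x : H) : ℝ := Real.sqrt (innerA A x x).re

/-- The `A`-numerical radius `w_A(T) = sup { |⟨Tx,x⟩_A| : ‖x‖_A = 1 }`. -/
def wA (A T : H →L[ℂ] H) : ℝ :=
  sSup {r : ℝ | ∃ x : H, normA A x = 1 ∧ r = ‖innerA A (T x) x‖}

/-- The `A`-Crawford number `c_A(T) = inf { |⟨Tx,x⟩_A| : ‖x‖_A = 1 }`. -/
def cA (A T : H →L[ℂ] H) : ℝ :=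
  sInf {r : ℝ | ∃ x : H, normA A x = 1 ∧ r = ‖innerA A (T x) x‖}

/-- The `A`-operator seminorm `‖T‖_A = sup { ‖Tx‖_A : ‖x‖_A = 1 }`. -/
def opNormA (A T : H →L[ℂ] H) : ℝ :=
  sSup {r : ℝ | ∃ x : H, normA A x = 1 ∧ r = normA A (T x)}

/-- The `A`-Euclidean operator radius of the pair `(B, C)`. -/
def wAe (A B C : H →L[ℂ] H) : ℝ :=
  sSup {r : ℝ | ∃ x : H, normA A x = 1 ∧
    r = Real.sqrt ((‖innerA A (B x) x‖)^2 + (‖innerA A (C x) x‖)^2)}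

/-- The `A`-Euclidean operator seminorm of the pair `(B, C)`. -/
def normAe (A B C : H →L[ℂ] H) : ℝ :=
  sSup {r : ℝ | ∃ x : H, normA A x = 1 ∧
    r = Real.sqrt ((normA A (B x))^2 + (normA A (C x))^2)}

/-- `Re_A(T) = (T + T♯)/2`, where `Ts` is an `A`-adjoint of `T`. -/
def ReA (T Ts : H →L[ℂ] H) : H →L[ℂ] H := (2 : ℂ)⁻¹ • (T + Ts)

/-- `Im_A(T) = (T - T♯)/(2i)`, where `Ts` is an `A`-adjoint of `T`. -/
def ImA (T Ts : H →L[ℂ] H) : H →L[ℂ] H := (2 * Complex.I)⁻¹ • (T - Ts)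

theorem Complex.norm_sq_add_norm_sq_rotate (s t : ℝ) (b c : ℂ) :
    ‖(s : ℂ) * b + t * c‖ ^ 2 + ‖(t : ℂ) * b - s * c‖ ^ 2
      = (s ^ 2 + t ^ 2) * (‖b‖ ^ 2 + ‖c‖ ^ 2) := by
  simp only [Complex.sq_norm, Complex.normSq_apply, Complex.add_re, Complex.add_im,
    Complex.sub_re, Complex.sub_im, Complex.mul_re, Complex.mul_im,
    Complex.ofReal_re, Complex.ofReal_im]
  ring

section SemiInner

omit [CompleteSpace H]

variable (A : H →L[ℂ] H)

theorem innerA_conj_symm (hA : A.IsPositive) (x y : H) :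
    starRingEnd ℂ (innerA A x y) = innerA A y x := by
  rw [innerA, innerA, inner_conj_symm]
  exact hA.isSymmetric x y

theorem norm_innerA_le (hA : A.IsPositive) (x y : H) :
    ‖innerA A x y‖ ≤ normA A x * normA A y := by
  let core : PreInnerProductSpace.Core ℂ H :=
    { inner u v := innerA A v u
      conj_inner_symm u v := innerA_conj_symm A hA u v
      re_inner_nonneg u := by simpa [innerA] using (Complex.le_def.mp (hA.inner_nonneg_right u)).1
      add_left u v w := by simp [innerA]
      smul_left u v r := by simp [innerA, mul_comm] }
  rw [mul_comm]
  exact InnerProductSpace.Core.norm_inner_le_norm (c := core) y x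

@[simp]
theorem innerA_add_left (u v y : H) : innerA A (u + v) y = innerA A u y + innerA A v y := by
  simp [innerA]

@[simp]
theorem innerA_sub_left (u v y : H) : innerA A (u - v) y = innerA A u y - innerA A v y := by
  simp [innerA]

@[simp]
theorem innerA_smul_left (c : ℂ) (u y : H) : innerA A (c • u) y = c * innerA A u y := by
  simp [innerA]

theorem norm_innerA_apply_self_le {T : H →L[ℂ] H} {lam : ℝ} (hA : A.IsPositive)
    (hT : ∀ x, normA A (T x) ≤ lam * normA A x) {x : H} (hx : normA A x = 1) :
    ‖innerA A (T x) x‖ ≤ lam :=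
  calc ‖innerA A (T x) x‖ ≤ normA A (T x) * normA A x := norm_innerA_le A hA (T x) x
    _ ≤ lam * normA A x * normA A x := mul_le_mul_of_nonneg_right (hT x) (Real.sqrt_nonneg _)
    _ = lam := by rw [hx, mul_one, mul_one]

theorem norm_innerA_apply_self_le_wA {T : H →L[ℂ] H} {M : ℝ}
    (hM : ∀ y, normA A y = 1 → ‖innerA A (T y) y‖ ≤ M) {x : H} (hx : normA A x = 1) :
    ‖innerA A (T x) x‖ ≤ wA A T :=
  le_csSup ⟨M, by rintro _ ⟨y, hy, rfl⟩; exact hM y hy⟩ ⟨x, hx, rfl⟩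

theorem wAe_sq_le {B C : H →L[ℂ] H} {M : ℝ} (hM0 : 0 ≤ M)
    (hM : ∀ x, normA A x = 1 → ‖innerA A (B x) x‖ ^ 2 + ‖innerA A (C x) x‖ ^ 2 ≤ M) :
    wAe A B C ^ 2 ≤ M := by
  have hle : wAe A B C ≤ √M :=
    Real.sSup_le (by rintro _ ⟨x, hx, rfl⟩; exact Real.sqrt_le_sqrt (hM x hx)) (Real.sqrt_nonneg _)
  have hnonneg : 0 ≤ wAe A B C :=
    Real.sSup_nonneg (by rintro _ ⟨x, -, rfl⟩; exact Real.sqrt_nonneg _)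
  calc wAe A B C ^ 2 ≤ √M ^ 2 := pow_le_pow_left₀ hnonneg hle 2
    _ = M := Real.sq_sqrt hM0

end SemiInner

theorem stmt18_general (A : H →L[ℂ] H) (hA : A.IsPositive)
    (B C : H →L[ℂ] H)
    (hBC : ∃ lam : ℝ, 0 < lam ∧ ∀ x : H,
      normA A (B x) ≤ lam * normA A x ∧ normA A (C x) ≤ lam * normA A x)
    (α : ℝ) (hα : α ∈ Set.Icc (0 : ℝ) 1) :
    (wAe A B C)^2
      ≤ (wA A (((Real.sqrt α : ℂ)) • B + ((Real.sqrt (1 - α) : ℂ)) • C))^2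
          + (wA A (((Real.sqrt (1 - α) : ℂ)) • B - ((Real.sqrt α : ℂ)) • C))^2 := by
  obtain ⟨lam, hlam, hbound⟩ := hBC
  set s := √α
  set t := √(1 - α)
  have hst : s ^ 2 + t ^ 2 = 1 := by
    rw [Real.sq_sqrt hα.1, Real.sq_sqrt (sub_nonneg.mpr hα.2)]; ring
  have hrotate : ∀ x, ‖innerA A (((s : ℂ) • B + (t : ℂ) • C) x) x‖ ^ 2
      + ‖innerA A (((t : ℂ) • B - (s : ℂ) • C) x) x‖ ^ 2
      = ‖innerA A (B x) x‖ ^ 2 + ‖innerA A (C x) x‖ ^ 2 := fun x => by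
    simp only [add_apply, sub_apply, smul_apply, innerA_add_left, innerA_sub_left,
      innerA_smul_left]
    rw [Complex.norm_sq_add_norm_sq_rotate, hst, one_mul]
  have hsum : ∀ x, normA A x = 1 →
      ‖innerA A (B x) x‖ ^ 2 + ‖innerA A (C x) x‖ ^ 2 ≤ 2 * lam ^ 2 := fun x hx => by
    have hB := norm_innerA_apply_self_le A hA (fun y => (hbound y).1) hx
    have hC := norm_innerA_apply_self_le A hA (fun y => (hbound y).2) hx
    nlinarith [norm_nonneg (innerA A (B x) x), norm_nonneg (innerA A (C x) x)]
  refine wAe_sq_le A (by positivity) fun x hx => ?_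
  rw [← hrotate x]
  gcongr <;> refine norm_innerA_apply_self_le_wA A (M := 2 * lam) (fun y hy => ?_) hx <;>
    nlinarith [hrotate y, hsum y hy]

theorem stmt18 (A : H →L[ℂ] H) (hA : A.IsPositive) (hA0 : A ≠ 0)
    (B C : H →L[ℂ] H)
    (hBC : ∃ lam : ℝ, 0 < lam ∧ ∀ x : H,
      normA A (B x) ≤ lam * normA A x ∧ normA A (C x) ≤ lam * normA A x)
    (α : ℝ) (hα : α ∈ Set.Icc (0 : ℝ) 1) :
    (wAe A B C)^2
      ≤ (wA A (((Real.sqrt α : ℂ)) • B + ((Real.sqrt (1 - α) : ℂ)) • C))^2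
          + (wA A (((Real.sqrt (1 - α) : ℂ)) • B - ((Real.sqrt α : ℂ)) • C))^2 :=
  stmt18_general A hA B C hBC α hα
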